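/- Lemma 1 (monotonicity in the history function): Assume the scalar auxiliary setting, that there is h̲ > 0 with H i t ≥ h̲ for all t and all i ≠ 0, and that the scalar auxiliary DDE has at most one solution for each history. If y₁ and y₂ are solutions of the scalar auxiliary DDE with continuous nonnegative histories ψ₁ and ψ₂ respectively, and ψ₁ s ≥ ψ₂ s for all s ∈ [t₀ − h̄, t₀], then y₁ t ≥ y₂ t for all t ≥ t₀. In particular, for constant histories ψ ≡ q, the solution at each time t ≥ t₀ is a monotone nondecreasing function of q. -/

import Mathlib

/-!
Write the equation as `y' = p y + R y`, where `R y t = c t * L t (y (t - H i t))ᵢ + g t` is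
nonnegative, monotone in `y` and sees only the window `[t - h̄, t]`. Integrating `p` away turns the
equation into the fixed-point problem `y = T y` for the variation-of-constants operator `T`, which
is monotone. Starting from `min y₁ y₂`, one step of `T` (with the past of `y₂`) goes down, so
the iterates decrease; for `t ≥ t₀` they stay nonnegative since `ψ₂ t₀ ≥ 0` and `R ≥ 0`, and by
dominated convergence their limit is again a solution with history `ψ₂`. Uniqueness identifies this limit with `y₂`, and it lies below
`min y₁ y₂ ≤ y₁`.
-/

open Filter Topology

noncomputable section

/-- `y` is a solution of the scalar auxiliary DDE
`y'(t) = p t * y t + c t * L t (fun i => y (t - H i t)) + g t` with history `ψ`. -/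
def IsScalarAuxSol (m : ℕ) (t₀ hb : ℝ) (H : Fin (m + 1) → ℝ → ℝ)
    (p c g : ℝ → ℝ) (L : ℝ → (Fin (m + 1) → ℝ) → ℝ) (ψ y : ℝ → ℝ) : Prop :=
  Continuous y ∧ (∀ t ∈ Set.Icc (t₀ - hb) t₀, y t = ψ t) ∧
    ∀ t ≥ t₀, HasDerivAt y (p t * y t + c t * (L t fun i => y (t - H i t)) + g t) t

open Set MeasureTheory

def variationOfConstants (p : ℝ → ℝ) (t₀ x₀ : ℝ) (f : ℝ → ℝ) (t : ℝ) : ℝ :=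
  Real.exp (∫ s in t₀..t, p s) * (x₀ + ∫ s in t₀..t, Real.exp (-∫ r in t₀..s, p r) * f s)

section VariationOfConstants

variable {p f : ℝ → ℝ} {t₀ x₀ t : ℝ}

theorem variationOfConstants_self : variationOfConstants p t₀ x₀ f t₀ = x₀ := by
  simp [variationOfConstants]

theorem continuous_integratingFactor (hp : Continuous p) (t₀ : ℝ) :
    Continuous fun s => Real.exp (-∫ r in t₀..s, p r) :=
  Real.continuous_exp.comp
    (intervalIntegral.continuous_primitive (fun a b => hp.intervalIntegrable a b) t₀).neg

theorem IntervalIntegrable.integratingFactor_mul (hp : Continuous p) {a b : ℝ}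
    (hf : IntervalIntegrable f volume a b) :
    IntervalIntegrable (fun s => Real.exp (-∫ r in t₀..s, p r) * f s) volume a b :=
  hf.continuousOn_mul (continuous_integratingFactor hp t₀).continuousOn

theorem continuous_variationOfConstants (hp : Continuous p)
    (hf : ∀ a b, IntervalIntegrable f volume a b) :
    Continuous (variationOfConstants p t₀ x₀ f) :=
  (Real.continuous_exp.comp (intervalIntegral.continuous_primitive
    (fun a b => hp.intervalIntegrable a b) t₀)).mul (continuous_const.add
      (intervalIntegral.continuous_primitive (fun a b => (hf a b).integratingFactor_mul hp) t₀))

theorem hasDerivAt_variationOfConstants (hp : Continuous p) (hf : Continuous f) (t : ℝ) :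
    HasDerivAt (variationOfConstants p t₀ x₀ f)
      (p t * variationOfConstants p t₀ x₀ f t + f t) t := by
  have hP := (hp.integral_hasStrictDerivAt t₀ t).hasDerivAt.exp
  have hw : Continuous fun s => Real.exp (-∫ r in t₀..s, p r) * f s :=
    (continuous_integratingFactor hp t₀).mul hf
  have hI := (hw.integral_hasStrictDerivAt t₀ t).hasDerivAt.const_add x₀
  refine (hP.fun_mul hI).congr_deriv ?_
  rw [variationOfConstants, mul_comm (Real.exp _) (p t), ← mul_assoc (Real.exp _),
    ← Real.exp_add, add_neg_cancel, Real.exp_zero, one_mul]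
  ring

theorem eq_variationOfConstants {y : ℝ → ℝ} (hp : Continuous p) (hf : Continuous f)
    (hy : ∀ t ≥ t₀, HasDerivAt y (p t * y t + f t) t) (ht : t₀ ≤ t) :
    y t = variationOfConstants p t₀ (y t₀) f t := by
  have hderiv : ∀ s ∈ uIcc t₀ t, HasDerivAt (fun s => Real.exp (-∫ r in t₀..s, p r) * y s)
      (Real.exp (-∫ r in t₀..s, p r) * f s) s := by
    intro s hs
    rw [uIcc_of_le ht] at hs
    refine (((hp.integral_hasStrictDerivAt t₀ s).hasDerivAt.fun_neg.exp).fun_mul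
      (hy s hs.1)).congr_deriv ?_
    ring
  have hFTC := intervalIntegral.integral_eq_sub_of_hasDerivAt hderiv
    (((continuous_integratingFactor hp t₀).mul hf).intervalIntegrable _ _)
  simp only [intervalIntegral.integral_same, neg_zero, Real.exp_zero, one_mul] at hFTC
  rw [variationOfConstants, hFTC, add_sub_cancel, ← mul_assoc, ← Real.exp_add, add_neg_cancel,
    Real.exp_zero, one_mul]

theorem variationOfConstants_le_variationOfConstants {x₀' : ℝ} {f' : ℝ → ℝ}
    (hp : Continuous p) (ht : t₀ ≤ t) (hx : x₀ ≤ x₀')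
    (hf : IntervalIntegrable f volume t₀ t) (hf' : IntervalIntegrable f' volume t₀ t)
    (hff' : ∀ s ∈ Icc t₀ t, f s ≤ f' s) :
    variationOfConstants p t₀ x₀ f t ≤ variationOfConstants p t₀ x₀' f' t :=
  mul_le_mul_of_nonneg_left (add_le_add hx <| intervalIntegral.integral_mono_on ht
    (hf.integratingFactor_mul hp) (hf'.integratingFactor_mul hp) fun s hs =>
      mul_le_mul_of_nonneg_left (hff' s hs) (Real.exp_pos _).le) (Real.exp_pos _).le

theorem variationOfConstants_nonneg (ht : t₀ ≤ t) (hx : 0 ≤ x₀)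
    (hf : ∀ s ∈ Icc t₀ t, 0 ≤ f s) : 0 ≤ variationOfConstants p t₀ x₀ f t :=
  mul_nonneg (Real.exp_pos _).le <| add_nonneg hx <| intervalIntegral.integral_nonneg ht
    fun s hs => mul_nonneg (Real.exp_pos _).le (hf s hs)

theorem tendsto_variationOfConstants {fs : ℕ → ℝ → ℝ} {F : ℝ → ℝ} (hp : Continuous p)
    (hfs : ∀ n, Continuous (fs n)) (hF : Continuous F) (hbound : ∀ n s, |fs n s| ≤ F s)
    (hlim : ∀ s, Tendsto (fun n => fs n s) atTop (𝓝 (f s))) :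
    Tendsto (fun n => variationOfConstants p t₀ x₀ (fs n) t) atTop
      (𝓝 (variationOfConstants p t₀ x₀ f t)) := by
  refine (Tendsto.const_add x₀ ?_).const_mul _
  refine intervalIntegral.tendsto_integral_filter_of_dominated_convergence _
    (Eventually.of_forall fun n =>
      ((continuous_integratingFactor hp t₀).mul (hfs n)).aestronglyMeasurable)
    (Eventually.of_forall fun n => ae_of_all _ fun s _ => ?_)
    (((continuous_integratingFactor hp t₀).mul hF).intervalIntegrable _ _)
    (ae_of_all _ fun s _ => (hlim s).const_mul _)
  rw [norm_mul, Real.norm_of_nonneg (Real.exp_pos _).le, Real.norm_eq_abs]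
  exact mul_le_mul_of_nonneg_left (hbound n s) (Real.exp_pos _).le

end VariationOfConstants

def IsDelaySol (t₀ hb : ℝ) (p : ℝ → ℝ) (R : (ℝ → ℝ) → ℝ → ℝ) (ψ y : ℝ → ℝ) : Prop :=
  Continuous y ∧ (∀ t ∈ Icc (t₀ - hb) t₀, y t = ψ t) ∧
    ∀ t ≥ t₀, HasDerivAt y (p t * y t + R y t) t

structure IsMonotoneDelayRhs (hb : ℝ) (R : (ℝ → ℝ) → ℝ → ℝ) : Prop where
  continuous : ∀ w, Continuous w → Continuous (R w)
  nonneg : ∀ w s, 0 ≤ R w s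
  mono : ∀ w w' s, (∀ u ∈ Icc (s - hb) s, w u ≤ w' u) → R w s ≤ R w' s
  tendsto : ∀ (w : ℕ → ℝ → ℝ) (w' : ℝ → ℝ), (∀ u, Tendsto (fun n => w n u) atTop (𝓝 (w' u))) →
    ∀ s, Tendsto (fun n => R (w n) s) atTop (𝓝 (R w' s))

/-- The past is copied from `φ`, not only from the history, so that a fixed point inherits from `φ`
its left derivative at `t₀`. -/
def picardMap (t₀ : ℝ) (p : ℝ → ℝ) (R : (ℝ → ℝ) → ℝ → ℝ) (φ w : ℝ → ℝ) (t : ℝ) : ℝ :=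
  if t ≤ t₀ then φ t else variationOfConstants p t₀ (φ t₀) (R w) t

theorem hasDerivAt_of_eqOn_Iic_of_eqOn_Ici {f g h : ℝ → ℝ} {a d : ℝ} (hg : HasDerivAt g d a)
    (hh : HasDerivAt h d a) (hfg : EqOn f g (Iic a)) (hfh : EqOn f h (Ici a)) :
    HasDerivAt f d a := by
  have := (hg.hasDerivWithinAt.congr hfg (hfg (mem_Iic.2 le_rfl))).union
    (hh.hasDerivWithinAt.congr hfh (hfh (mem_Ici.2 le_rfl)))
  rwa [Iic_union_Ici, hasDerivWithinAt_univ] at this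

section Picard

variable {t₀ hb t : ℝ} {p : ℝ → ℝ} {R : (ℝ → ℝ) → ℝ → ℝ} {φ w w' : ℝ → ℝ}

theorem picardMap_of_le (ht : t ≤ t₀) : picardMap t₀ p R φ w t = φ t :=
  if_pos ht

theorem picardMap_of_ge (ht : t₀ ≤ t) :
    picardMap t₀ p R φ w t = variationOfConstants p t₀ (φ t₀) (R w) t := by
  rcases ht.eq_or_lt with rfl | ht
  · rw [picardMap_of_le le_rfl, variationOfConstants_self]
  · exact if_neg ht.not_ge

theorem continuous_picardMap (hp : Continuous p) (hφ : Continuous φ)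
    (hw : ∀ a b, IntervalIntegrable (R w) volume a b) : Continuous (picardMap t₀ p R φ w) :=
  Continuous.if_le hφ (continuous_variationOfConstants hp hw) continuous_id continuous_const
    fun t ht => by rw [ht, variationOfConstants_self]

theorem IsMonotoneDelayRhs.variationOfConstants_le (hR : IsMonotoneDelayRhs hb R)
    (hp : Continuous p) (hw : Continuous w) (hw' : Continuous w') {x₀ x₀' : ℝ} (ht : t₀ ≤ t)
    (hx : x₀ ≤ x₀') (hww' : ∀ u, t₀ - hb ≤ u → w u ≤ w' u) :
    variationOfConstants p t₀ x₀ (R w) t ≤ variationOfConstants p t₀ x₀' (R w') t :=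
  variationOfConstants_le_variationOfConstants hp ht hx
    ((hR.continuous w hw).intervalIntegrable _ _) ((hR.continuous w' hw').intervalIntegrable _ _)
    fun s hs => hR.mono w w' s fun u hu => hww' u (by linarith [hs.1, hu.1])

theorem picardMap_le_picardMap (hR : IsMonotoneDelayRhs hb R) (hp : Continuous p)
    (hw : Continuous w) (hw' : Continuous w') (hww' : ∀ u, t₀ - hb ≤ u → w u ≤ w' u) (t : ℝ) :
    picardMap t₀ p R φ w t ≤ picardMap t₀ p R φ w' t := by
  rcases le_total t t₀ with ht | ht
  · rw [picardMap_of_le ht, picardMap_of_le ht]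
  · rw [picardMap_of_ge ht, picardMap_of_ge ht]
    exact hR.variationOfConstants_le hp hw hw' ht le_rfl hww'

theorem min_le_picardMap (hR : IsMonotoneDelayRhs hb R) (hφ : 0 ≤ φ t₀) (t : ℝ) :
    min (φ t) 0 ≤ picardMap t₀ p R φ w t := by
  rcases le_total t t₀ with ht | ht
  · rw [picardMap_of_le ht]
    exact min_le_left _ _
  · rw [picardMap_of_ge ht]
    exact (min_le_right _ _).trans
      (variationOfConstants_nonneg ht hφ fun s _ => hR.nonneg w s)

theorem IsDelaySol.picardMap_self {ψ y : ℝ → ℝ} (hy : IsDelaySol t₀ hb p R ψ y)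
    (hp : Continuous p) (hRy : Continuous (R y)) : picardMap t₀ p R y y = y := by
  funext t
  rcases le_total t t₀ with ht | ht
  · exact picardMap_of_le ht
  · rw [picardMap_of_ge ht]
    exact (eq_variationOfConstants hp hRy hy.2.2 ht).symm

theorem IsDelaySol.of_picardMap_eq {ψ y v : ℝ → ℝ} (hy : IsDelaySol t₀ hb p R ψ y)
    (hp : Continuous p) (hR : IsMonotoneDelayRhs hb R) (hv : Continuous v)
    (hfix : picardMap t₀ p R y v = v) : IsDelaySol t₀ hb p R ψ v := by
  have hpast : ∀ t ≤ t₀, v t = y t := fun t ht =>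
    (congrFun hfix t).symm.trans (picardMap_of_le ht)
  have hfuture : ∀ t ≥ t₀, v t = variationOfConstants p t₀ (y t₀) (R v) t := fun t ht =>
    (congrFun hfix t).symm.trans (picardMap_of_ge ht)
  have hcausal : R v t₀ = R y t₀ :=
    le_antisymm (hR.mono _ _ _ fun u hu => (hpast u hu.2).le)
      (hR.mono _ _ _ fun u hu => (hpast u hu.2).ge)
  refine ⟨hv, fun t ht => (hpast t ht.2).trans (hy.2.1 t ht), fun t ht => ?_⟩
  have hφ := hasDerivAt_variationOfConstants (t₀ := t₀) (x₀ := y t₀) hp (hR.continuous v hv) t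
  rw [← hfuture t ht] at hφ
  rcases ht.eq_or_lt with rfl | ht
  · rw [hpast t₀ le_rfl, hcausal] at hφ ⊢
    exact hasDerivAt_of_eqOn_Iic_of_eqOn_Ici (hy.2.2 t₀ le_rfl) hφ (fun u hu => hpast u hu)
      fun u hu => hfuture u hu
  · exact hφ.congr_of_eventuallyEq
      (eventually_of_mem (Ioi_mem_nhds ht) fun u hu => hfuture u (le_of_lt hu))

end Picard

section Iteration

variable {t₀ hb : ℝ} {p : ℝ → ℝ} {R : (ℝ → ℝ) → ℝ → ℝ} {φ : ℝ → ℝ}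

theorem picardMap_eq_of_antitone_tendsto (hp : Continuous p) (hR : IsMonotoneDelayRhs hb R)
    (hφ : Continuous φ) {u : ℕ → ℝ → ℝ} {v : ℝ → ℝ} (hu : ∀ n, Continuous (u n))
    (hsucc : ∀ n, picardMap t₀ p R φ (u n) = u (n + 1)) (hanti : ∀ t, Antitone fun n => u n t)
    (hlim : ∀ t, Tendsto (fun n => u n t) atTop (𝓝 (v t))) :
    Continuous v ∧ picardMap t₀ p R φ v = v := by
  have hRlim := hR.tendsto u v hlim
  have hbound : ∀ n s, |R (u n) s| ≤ R (u 0) s := fun n s => by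
    rw [abs_of_nonneg (hR.nonneg _ s)]
    exact hR.mono _ _ _ fun r _ => hanti r (Nat.zero_le n)
  have hRv_int : ∀ a b, IntervalIntegrable (R v) volume a b := by
    have hmeas : Measurable (R v) := measurable_of_tendsto_metrizable
      (fun n => (hR.continuous _ (hu n)).measurable) (tendsto_pi_nhds.2 hRlim)
    refine fun a b => ((hR.continuous _ (hu 0)).intervalIntegrable a b).mono_fun'
      hmeas.aestronglyMeasurable (ae_of_all _ fun s => ?_)
    dsimp only
    rw [Real.norm_of_nonneg (hR.nonneg v s)]
    exact hR.mono _ _ _ fun r _ => (hanti r).le_of_tendsto (hlim r) 0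
  have hfix : picardMap t₀ p R φ v = v := by
    funext t
    refine tendsto_nhds_unique (f := fun n => u (n + 1) t) ?_
      ((hlim t).comp (tendsto_add_atTop_nat 1))
    simp only [← hsucc]
    rcases le_total t t₀ with ht | ht
    · simp only [picardMap_of_le ht, tendsto_const_nhds]
    · simp only [picardMap_of_ge ht]
      exact tendsto_variationOfConstants hp (fun n => hR.continuous _ (hu n))
        (hR.continuous _ (hu 0)) hbound hRlim
  refine ⟨?_, hfix⟩
  rw [← hfix]
  exact continuous_picardMap hp hφ hRv_int

theorem exists_picardMap_eq_le (hp : Continuous p) (hR : IsMonotoneDelayRhs hb R)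
    (hφ : Continuous φ) (hφ₀ : 0 ≤ φ t₀) {w₀ : ℝ → ℝ} (hw₀ : Continuous w₀)
    (hstep : ∀ t, t₀ - hb ≤ t → picardMap t₀ p R φ w₀ t ≤ w₀ t) :
    ∃ v, Continuous v ∧ picardMap t₀ p R φ v = v ∧ ∀ t, t₀ - hb ≤ t → v t ≤ w₀ t := by
  set T := picardMap t₀ p R φ
  have hiterate : ∀ n, T^[n + 1] w₀ = T (T^[n] w₀) := fun n =>
    Function.iterate_succ_apply' T n w₀
  have hcont : ∀ n, Continuous (T^[n] w₀) := by
    intro n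
    induction n with
    | zero => exact hw₀
    | succ n ih =>
      rw [hiterate]
      exact continuous_picardMap hp hφ fun a b => (hR.continuous _ ih).intervalIntegrable a b
  have hdescent : ∀ n, (∀ t, t₀ - hb ≤ t → T^[n + 1] w₀ t ≤ T^[n] w₀ t) →
      ∀ t, T^[n + 2] w₀ t ≤ T^[n + 1] w₀ t := fun n h t =>
    calc T^[n + 2] w₀ t = T (T^[n + 1] w₀) t := congrFun (hiterate (n + 1)) t
      _ ≤ T (T^[n] w₀) t := picardMap_le_picardMap hR hp (hcont _) (hcont _) h t
      _ = T^[n + 1] w₀ t := (congrFun (hiterate n) t).symm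
  have hstep_iterate : ∀ n, ∀ t, t₀ - hb ≤ t → T^[n + 1] w₀ t ≤ T^[n] w₀ t := by
    intro n
    induction n with
    | zero => exact hstep
    | succ n ih => exact fun t _ => hdescent n ih t
  have hanti : ∀ t, Antitone fun n => T^[n + 1] w₀ t := fun t =>
    antitone_nat_of_succ_le fun n => hdescent n (hstep_iterate n) t
  have hbdd : ∀ t, BddBelow (range fun n => T^[n + 1] w₀ t) := fun t =>
    ⟨min (φ t) 0, by
      rintro _ ⟨n, rfl⟩
      exact (min_le_picardMap hR hφ₀ t).trans_eq (congrFun (hiterate n) t).symm⟩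
  obtain ⟨hv, hfix⟩ := picardMap_eq_of_antitone_tendsto hp hR hφ (fun n => hcont (n + 1))
    (fun n => (hiterate (n + 1)).symm) hanti
    fun t => tendsto_atTop_ciInf (hanti t) (hbdd t)
  exact ⟨_, hv, hfix, fun t ht => (ciInf_le (hbdd t) 0).trans (hstep t ht)⟩

end Iteration

theorem IsDelaySol.le_of_history_le {t₀ hb : ℝ} {p : ℝ → ℝ} {R : (ℝ → ℝ) → ℝ → ℝ}
    {ψ₁ ψ₂ y₁ y₂ : ℝ → ℝ} (h₂ : IsDelaySol t₀ hb p R ψ₂ y₂) (h₁ : IsDelaySol t₀ hb p R ψ₁ y₁)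
    (hp : Continuous p) (hR : IsMonotoneDelayRhs hb R) (hb₀ : 0 ≤ hb)
    (hψ : ∀ s ∈ Icc (t₀ - hb) t₀, ψ₂ s ≤ ψ₁ s) (hψ₂ : 0 ≤ ψ₂ t₀)
    (huniq : ∀ y, IsDelaySol t₀ hb p R ψ₂ y → ∀ t ≥ t₀, y t = y₂ t) :
    ∀ t ≥ t₀, y₂ t ≤ y₁ t := by
  have ht₀ : t₀ ∈ Icc (t₀ - hb) t₀ := ⟨by linarith, le_rfl⟩
  set w₀ := fun t => min (y₁ t) (y₂ t)
  have hw₀ : Continuous w₀ := h₁.1.min h₂.1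
  have hstep : ∀ t, t₀ - hb ≤ t → picardMap t₀ p R y₂ w₀ t ≤ w₀ t := by
    intro t ht
    refine le_min ?_ ?_
    · rcases le_total t t₀ with ht' | ht'
      · rw [picardMap_of_le ht', h₁.2.1 t ⟨ht, ht'⟩, h₂.2.1 t ⟨ht, ht'⟩]
        exact hψ t ⟨ht, ht'⟩
      · rw [picardMap_of_ge ht', eq_variationOfConstants hp (hR.continuous _ h₁.1) h₁.2.2 ht']
        refine hR.variationOfConstants_le hp hw₀ h₁.1 ht' ?_ fun u _ => min_le_left _ _
        rw [h₁.2.1 _ ht₀, h₂.2.1 _ ht₀]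
        exact hψ _ ht₀
    · calc picardMap t₀ p R y₂ w₀ t ≤ picardMap t₀ p R y₂ y₂ t :=
            picardMap_le_picardMap hR hp hw₀ h₂.1 (fun u _ => min_le_right _ _) t
        _ = y₂ t := congrFun (h₂.picardMap_self hp (hR.continuous _ h₂.1)) t
  obtain ⟨v, hv, hfix, hle⟩ :=
    exists_picardMap_eq_le hp hR h₂.1 ((h₂.2.1 t₀ ht₀).symm ▸ hψ₂) hw₀ hstep
  intro t ht
  calc y₂ t = v t := (huniq v (h₂.of_picardMap_eq hp hR hv hfix) t ht).symm
    _ ≤ w₀ t := hle t (by linarith)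
    _ ≤ y₁ t := min_le_left _ _

def delayRhs {ι : Type*} (H : ι → ℝ → ℝ) (c g : ℝ → ℝ) (L : ℝ → (ι → ℝ) → ℝ)
    (w : ℝ → ℝ) (s : ℝ) : ℝ :=
  c s * L s (fun i => w (s - H i s)) + g s

theorem isMonotoneDelayRhs_delayRhs {ι : Type*} {H : ι → ℝ → ℝ} {c g : ℝ → ℝ}
    {L : ℝ → (ι → ℝ) → ℝ} {hb : ℝ} (hH : ∀ i, Continuous (H i)) (hH₀ : ∀ i t, 0 ≤ H i t)
    (hHle : ∀ i t, H i t ≤ hb) (hc : Continuous c) (hc₀ : ∀ t, 0 ≤ c t) (hg : Continuous g)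
    (hg₀ : ∀ t, 0 ≤ g t) (hL : Continuous fun q : ℝ × (ι → ℝ) => L q.1 q.2)
    (hL₀ : ∀ t ζ, 0 ≤ L t ζ) (hLmono : ∀ t ζ ζ', (∀ i, ζ i ≤ ζ' i) → L t ζ ≤ L t ζ') :
    IsMonotoneDelayRhs hb (delayRhs H c g L) where
  continuous w hw := (hc.mul (hL.comp (continuous_id.prodMk
    (continuous_pi fun i => hw.comp (continuous_id.sub (hH i)))))).add hg
  nonneg w s := add_nonneg (mul_nonneg (hc₀ s) (hL₀ _ _)) (hg₀ s)
  mono w w' s hww' := add_le_add_left (mul_le_mul_of_nonneg_left (hLmono _ _ _ fun i =>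
    hww' _ ⟨by linarith [hHle i s], by linarith [hH₀ i s]⟩) (hc₀ s)) _
  tendsto w w' hlim s := (((hL.tendsto _).comp (tendsto_const_nhds.prodMk_nhds
    (tendsto_pi_nhds.2 fun i => hlim _))).const_mul _).add_const _

theorem isScalarAuxSol_iff {m : ℕ} {t₀ hb : ℝ} {H : Fin (m + 1) → ℝ → ℝ} {p c g : ℝ → ℝ}
    {L : ℝ → (Fin (m + 1) → ℝ) → ℝ} {ψ y : ℝ → ℝ} :
    IsScalarAuxSol m t₀ hb H p c g L ψ y ↔ IsDelaySol t₀ hb p (delayRhs H c g L) ψ y := by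
  simp only [IsScalarAuxSol, IsDelaySol, delayRhs, add_assoc]

theorem lemma1_history_monotonicity_general
    (m : ℕ) (t₀ hb : ℝ)
    (H : Fin (m + 1) → ℝ → ℝ) (hHcont : ∀ i, Continuous (H i))
    (hHnonneg : ∀ i t, 0 ≤ H i t) (hHle : ∀ i t, H i t ≤ hb)
    (p c : ℝ → ℝ) (hp : Continuous p) (hc : Continuous c) (hc1 : ∀ t, 1 ≤ c t)
    (g : ℝ → ℝ) (hg : Continuous g) (hgnonneg : ∀ t, 0 ≤ g t)
    (L : ℝ → (Fin (m + 1) → ℝ) → ℝ)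
    (hL : Continuous fun q : ℝ × (Fin (m + 1) → ℝ) => L q.1 q.2)
    (hLnonneg : ∀ t ζ, 0 ≤ L t ζ)
    (hLmono : ∀ t ζ ζ', (∀ i, ζ i ≤ ζ' i) → L t ζ ≤ L t ζ')
    (huniq : ∀ ψ : ℝ → ℝ, Continuous ψ → (∀ s ∈ Set.Icc (t₀ - hb) t₀, 0 ≤ ψ s) →
      ∀ y₁ y₂ : ℝ → ℝ, IsScalarAuxSol m t₀ hb H p c g L ψ y₁ →
        IsScalarAuxSol m t₀ hb H p c g L ψ y₂ → ∀ t ≥ t₀, y₁ t = y₂ t) :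
    (∀ ψ₁ ψ₂ y₁ y₂ : ℝ → ℝ, Continuous ψ₁ → Continuous ψ₂ →
      (∀ s ∈ Set.Icc (t₀ - hb) t₀, 0 ≤ ψ₁ s) → (∀ s ∈ Set.Icc (t₀ - hb) t₀, 0 ≤ ψ₂ s) →
      IsScalarAuxSol m t₀ hb H p c g L ψ₁ y₁ → IsScalarAuxSol m t₀ hb H p c g L ψ₂ y₂ →
      (∀ s ∈ Set.Icc (t₀ - hb) t₀, ψ₂ s ≤ ψ₁ s) → ∀ t ≥ t₀, y₂ t ≤ y₁ t) ∧
    ∀ q₁ q₂ : ℝ, 0 ≤ q₂ → q₂ ≤ q₁ →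
      ∀ z₁ z₂ : ℝ → ℝ, IsScalarAuxSol m t₀ hb H p c g L (fun _ => q₁) z₁ →
        IsScalarAuxSol m t₀ hb H p c g L (fun _ => q₂) z₂ → ∀ t ≥ t₀, z₂ t ≤ z₁ t := by
  have hR : IsMonotoneDelayRhs hb (delayRhs H c g L) :=
    isMonotoneDelayRhs_delayRhs hHcont hHnonneg hHle hc (fun t => zero_le_one.trans (hc1 t)) hg
      hgnonneg hL hLnonneg hLmono
  have hb₀ : 0 ≤ hb := (hHnonneg 0 t₀).trans (hHle 0 t₀)
  have key : ∀ {ψ₁ ψ₂ y₁ y₂ : ℝ → ℝ}, Continuous ψ₂ → (∀ s ∈ Icc (t₀ - hb) t₀, 0 ≤ ψ₂ s) →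
      IsScalarAuxSol m t₀ hb H p c g L ψ₁ y₁ → IsScalarAuxSol m t₀ hb H p c g L ψ₂ y₂ →
      (∀ s ∈ Icc (t₀ - hb) t₀, ψ₂ s ≤ ψ₁ s) → ∀ t ≥ t₀, y₂ t ≤ y₁ t :=
    fun hψ₂ hψ₂₀ h₁ h₂ hψ =>
      (isScalarAuxSol_iff.1 h₂).le_of_history_le (isScalarAuxSol_iff.1 h₁) hp hR hb₀ hψ
        (hψ₂₀ t₀ ⟨by linarith, le_rfl⟩) fun y hy =>
          huniq _ hψ₂ hψ₂₀ y _ (isScalarAuxSol_iff.2 hy) h₂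
  exact ⟨fun _ _ _ _ _ hψ₂ _ hψ₂₀ h₁ h₂ hψ => key hψ₂ hψ₂₀ h₁ h₂ hψ,
    fun _ _ hq₂ hq _ _ h₁ h₂ => key continuous_const (fun _ _ => hq₂) h₁ h₂ fun _ _ => hq⟩

/-- Lemma 1 (monotonicity in the history function): a larger history gives a larger
solution; in particular, for constant histories the solution is monotone
nondecreasing in the constant. -/
theorem lemma1_history_monotonicity
    (m : ℕ) (t₀ hb : ℝ) (hhb : 0 < hb)
    (H : Fin (m + 1) → ℝ → ℝ) (hHcont : ∀ i, Continuous (H i))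
    (hH0 : ∀ t, H 0 t = 0) (hHnonneg : ∀ i t, 0 ≤ H i t) (hHle : ∀ i t, H i t ≤ hb)
    (hlow : ℝ) (hhlow : 0 < hlow) (hHlow : ∀ i : Fin (m + 1), i ≠ 0 → ∀ t, hlow ≤ H i t)
    (p c : ℝ → ℝ) (hp : Continuous p) (hc : Continuous c) (hc1 : ∀ t, 1 ≤ c t)
    (g : ℝ → ℝ) (hg : Continuous g) (hgnonneg : ∀ t, 0 ≤ g t)
    (L : ℝ → (Fin (m + 1) → ℝ) → ℝ)
    (hL : Continuous fun q : ℝ × (Fin (m + 1) → ℝ) => L q.1 q.2)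
    (hL0 : ∀ t, L t 0 = 0)
    (hLnonneg : ∀ t ζ, 0 ≤ L t ζ)
    (hLmono : ∀ t ζ ζ', (∀ i, ζ i ≤ ζ' i) → L t ζ ≤ L t ζ')
    (huniq : ∀ ψ : ℝ → ℝ, Continuous ψ → (∀ s ∈ Set.Icc (t₀ - hb) t₀, 0 ≤ ψ s) →
      ∀ y₁ y₂ : ℝ → ℝ, IsScalarAuxSol m t₀ hb H p c g L ψ y₁ →
        IsScalarAuxSol m t₀ hb H p c g L ψ y₂ → ∀ t ≥ t₀, y₁ t = y₂ t) :
    (∀ ψ₁ ψ₂ y₁ y₂ : ℝ → ℝ, Continuous ψ₁ → Continuous ψ₂ →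
      (∀ s ∈ Set.Icc (t₀ - hb) t₀, 0 ≤ ψ₁ s) → (∀ s ∈ Set.Icc (t₀ - hb) t₀, 0 ≤ ψ₂ s) →
      IsScalarAuxSol m t₀ hb H p c g L ψ₁ y₁ → IsScalarAuxSol m t₀ hb H p c g L ψ₂ y₂ →
      (∀ s ∈ Set.Icc (t₀ - hb) t₀, ψ₂ s ≤ ψ₁ s) → ∀ t ≥ t₀, y₂ t ≤ y₁ t) ∧
    ∀ q₁ q₂ : ℝ, 0 ≤ q₂ → q₂ ≤ q₁ →
      ∀ z₁ z₂ : ℝ → ℝ, IsScalarAuxSol m t₀ hb H p c g L (fun _ => q₁) z₁ →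
        IsScalarAuxSol m t₀ hb H p c g L (fun _ => q₂) z₂ → ∀ t ≥ t₀, z₂ t ≤ z₁ t :=
  lemma1_history_monotonicity_general m t₀ hb H hHcont hHnonneg hHle p c hp hc hc1 g hg hgnonneg L
    hL hLnonneg hLmono huniq
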